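/- Let n ≥ 1, p ∈ [0,1], and let (Ω, μ) be a probability space carrying complex random variables R_{ij} for all pairs i ≠ j in Fin n, which are independent, square-integrable, have mean 0, and satisfy E|R_{ij}|² = 1 − p²; set R_{ii} = 0. Let z ∈ ℂⁿ be a fixed (deterministic) vector with |z_j| = 1/√n for every j. Then E[ ‖R z‖² − |zᴴ R z|² ] = (1 − p²)(n − 1)²/n, and hence E[ ‖R z‖² − |zᴴ R z|² ] / (n p)² = (n − 1)²(1 − p²)/(n³ p²) whenever p > 0. -/

import Mathlib

/-!
Distinct entries of `R` are independent and centred, hence orthogonal in `L²`, so expanding a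
squared modulus of a linear combination of entries leaves only the squared terms (Pythagoras):
`E ‖R z‖² = ∑_{i ≠ j} |z_j|² (1 - p²) = (n - 1)(1 - p²)` and
`E |z* R z|² = ∑_{i ≠ j} |z_i|² |z_j|² (1 - p²) = (n - 1)(1 - p²) / n`.
The difference is `(1 - p²)(n - 1)² / n`.
-/

open MeasureTheory ProbabilityTheory ComplexConjugate

lemma Fintype.sum_ite_eq_zero_const {ι R : Type*} [Fintype ι] [DecidableEq ι] [Ring R]
    (i : ι) (c : R) :
    ∑ j, (if i = j then 0 else c) = ((Fintype.card ι : R) - 1) * c := by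
  simp [Finset.sum_ite, Finset.filter_ne, sub_mul, Nat.cast_pred (Fintype.card_pos_iff.2 ⟨i⟩)]

lemma quadForm_eq_sum_prod {𝕜 ι : Type*} [CommSemiring 𝕜] [StarRing 𝕜] [Fintype ι]
    (z : ι → 𝕜) (M : ι → ι → 𝕜) :
    ∑ i, ∑ j, conj (z i) * M i j * z j = ∑ a : ι × ι, M a.1 a.2 * (conj (z a.1) * z a.2) := by
  rw [Fintype.sum_prod_type]
  exact Finset.sum_congr rfl fun i _ => Finset.sum_congr rfl fun j _ => by ring

section Pythagoras

variable {Ω 𝕜 ι : Type*} [RCLike 𝕜] [MeasurableSpace Ω] {μ : Measure Ω} [Fintype ι]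

lemma integral_norm_sq_sum_of_orthogonal {f : ι → Ω → 𝕜} (hf : ∀ a, MemLp (f a) 2 μ)
    (horth : ∀ a b, a ≠ b → ∫ ω, conj (f a ω) * f b ω ∂μ = 0) :
    ∫ ω, ‖∑ a, f a ω‖ ^ 2 ∂μ = ∑ a, ∫ ω, ‖f a ω‖ ^ 2 ∂μ := by
  have hint : ∀ a b, Integrable (fun ω => conj (f a ω) * f b ω) μ := fun a b =>
    (hf a).star.integrable_mul (hf b)
  suffices h : ((∫ ω, ‖∑ a, f a ω‖ ^ 2 ∂μ : ℝ) : 𝕜) = ((∑ a, ∫ ω, ‖f a ω‖ ^ 2 ∂μ : ℝ) : 𝕜) from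
    RCLike.ofReal_injective h
  calc ((∫ ω, ‖∑ a, f a ω‖ ^ 2 ∂μ : ℝ) : 𝕜)
      = ∫ ω, ∑ a, ∑ b, conj (f a ω) * f b ω ∂μ := by
        rw [← integral_ofReal]
        congr 1 with ω
        rw [← Finset.sum_mul_sum, ← map_sum, RCLike.conj_mul, RCLike.ofReal_pow]
    _ = ∑ a, ∑ b, ∫ ω, conj (f a ω) * f b ω ∂μ := by
        rw [integral_finsetSum _ fun a _ => integrable_finsetSum _ fun b _ => hint a b]
        exact Finset.sum_congr rfl fun a _ => integral_finsetSum _ fun b _ => hint a b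
    _ = ∑ a, ∫ ω, conj (f a ω) * f a ω ∂μ :=
        Finset.sum_congr rfl fun a _ => Fintype.sum_eq_single a fun b hb => horth a b (Ne.symm hb)
    _ = ((∑ a, ∫ ω, ‖f a ω‖ ^ 2 ∂μ : ℝ) : 𝕜) := by
        push_cast [← integral_ofReal]
        simp_rw [RCLike.conj_mul]

lemma integral_norm_sq_sum_mul_of_orthogonal {f : ι → Ω → 𝕜} (hf : ∀ a, MemLp (f a) 2 μ)
    (horth : ∀ a b, a ≠ b → ∫ ω, conj (f a ω) * f b ω ∂μ = 0) (c : ι → 𝕜) :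
    ∫ ω, ‖∑ a, f a ω * c a‖ ^ 2 ∂μ = ∑ a, ‖c a‖ ^ 2 * ∫ ω, ‖f a ω‖ ^ 2 ∂μ := by
  rw [integral_norm_sq_sum_of_orthogonal fun a => (hf a).mul_const (c a)]
  · simp_rw [norm_mul, mul_pow, integral_mul_const, mul_comm]
  · intro a b hab
    simp_rw [map_mul, mul_mul_mul_comm, integral_mul_const, horth a b hab, zero_mul]

lemma integrable_norm_sq_sum_mul {f : ι → Ω → 𝕜} (hf : ∀ a, MemLp (f a) 2 μ) (c : ι → 𝕜) :
    Integrable (fun ω => ‖∑ a, f a ω * c a‖ ^ 2) μ :=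
  (memLp_finsetSum _ fun a _ => (hf a).mul_const (c a)).integrable_norm_pow two_ne_zero

end Pythagoras

lemma IndepFun.integral_conj_mul_eq_zero {Ω 𝕜 : Type*} [RCLike 𝕜] [MeasurableSpace Ω]
    {μ : Measure Ω} {X Y : Ω → 𝕜} (hXY : IndepFun X Y μ)
    (hX : AEStronglyMeasurable X μ) (hY : AEStronglyMeasurable Y μ) (hY0 : ∫ ω, Y ω ∂μ = 0) :
    ∫ ω, conj (X ω) * Y ω ∂μ = 0 := by
  have h := (hXY.comp RCLike.continuous_conj.measurable measurable_id)
    |>.integral_fun_mul_eq_mul_integral (RCLike.continuous_conj.comp_aestronglyMeasurable hX) hY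
  simpa [hY0] using h

section NoiseMatrix

variable {Ω 𝕜 ι : Type*} [RCLike 𝕜] [MeasurableSpace Ω] {μ : Measure Ω} {R : ι → ι → Ω → 𝕜}

lemma memLp_two_entry (hL2 : ∀ i j, i ≠ j → MemLp (R i j) 2 μ) (hdiag : ∀ i ω, R i i ω = 0)
    (i j : ι) : MemLp (R i j) 2 μ := by
  obtain rfl | hij := eq_or_ne i j
  · simp [funext (hdiag i)]
  · exact hL2 i j hij

lemma integral_entry_eq_zero (hmean : ∀ i j, i ≠ j → ∫ ω, R i j ω ∂μ = 0)
    (hdiag : ∀ i ω, R i i ω = 0) (i j : ι) : ∫ ω, R i j ω ∂μ = 0 := by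
  obtain rfl | hij := eq_or_ne i j
  · simp [hdiag]
  · exact hmean i j hij

lemma integral_norm_sq_entry [DecidableEq ι] {v : ℝ}
    (hvar : ∀ i j, i ≠ j → ∫ ω, ‖R i j ω‖ ^ 2 ∂μ = v) (hdiag : ∀ i ω, R i i ω = 0) (i j : ι) :
    ∫ ω, ‖R i j ω‖ ^ 2 ∂μ = if i = j then 0 else v := by
  split_ifs with hij
  · simp [hij, hdiag]
  · exact hvar i j hij

lemma integral_conj_mul_entries_eq_zero (hindep : iIndepFun (fun ij : ι × ι => R ij.1 ij.2) μ)
    (hL2 : ∀ i j, i ≠ j → MemLp (R i j) 2 μ) (hmean : ∀ i j, i ≠ j → ∫ ω, R i j ω ∂μ = 0)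
    (hdiag : ∀ i ω, R i i ω = 0) {a b : ι × ι} (hab : a ≠ b) :
    ∫ ω, conj (R a.1 a.2 ω) * R b.1 b.2 ω ∂μ = 0 :=
  IndepFun.integral_conj_mul_eq_zero (hindep.indepFun hab) (memLp_two_entry hL2 hdiag _ _).1
    (memLp_two_entry hL2 hdiag _ _).1 (integral_entry_eq_zero hmean hdiag _ _)

variable [Fintype ι] (z : ι → 𝕜)

lemma integrable_sum_norm_sq_rows (hR : ∀ i j, MemLp (R i j) 2 μ) :
    Integrable (fun ω => ∑ i, ‖∑ j, R i j ω * z j‖ ^ 2) μ :=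
  integrable_finsetSum _ fun i _ => integrable_norm_sq_sum_mul (hR i) z

lemma integral_sum_norm_sq_rows (hR : ∀ i j, MemLp (R i j) 2 μ)
    (horth : ∀ a b : ι × ι, a ≠ b → ∫ ω, conj (R a.1 a.2 ω) * R b.1 b.2 ω ∂μ = 0) :
    ∫ ω, ∑ i, ‖∑ j, R i j ω * z j‖ ^ 2 ∂μ = ∑ i, ∑ j, ‖z j‖ ^ 2 * ∫ ω, ‖R i j ω‖ ^ 2 ∂μ := by
  rw [integral_finsetSum _ fun i _ => integrable_norm_sq_sum_mul (hR i) z]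
  refine Finset.sum_congr rfl fun i _ => integral_norm_sq_sum_mul_of_orthogonal (hR i) ?_ z
  exact fun j k hjk => horth (i, j) (i, k) (by simpa using hjk)

lemma integrable_norm_sq_quadForm (hR : ∀ i j, MemLp (R i j) 2 μ) :
    Integrable (fun ω => ‖∑ i, ∑ j, conj (z i) * R i j ω * z j‖ ^ 2) μ := by
  refine (integrable_norm_sq_sum_mul (fun a : ι × ι => hR a.1 a.2)
    fun a => conj (z a.1) * z a.2).congr (ae_of_all _ fun ω => ?_)
  simp only [quadForm_eq_sum_prod]

lemma integral_norm_sq_quadForm (hR : ∀ i j, MemLp (R i j) 2 μ)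
    (horth : ∀ a b : ι × ι, a ≠ b → ∫ ω, conj (R a.1 a.2 ω) * R b.1 b.2 ω ∂μ = 0) :
    ∫ ω, ‖∑ i, ∑ j, conj (z i) * R i j ω * z j‖ ^ 2 ∂μ
      = ∑ i, ∑ j, ‖z i‖ ^ 2 * ‖z j‖ ^ 2 * ∫ ω, ‖R i j ω‖ ^ 2 ∂μ := by
  simp only [quadForm_eq_sum_prod]
  refine (integral_norm_sq_sum_mul_of_orthogonal (fun a : ι × ι => hR a.1 a.2) horth _).trans ?_
  simp only [Fintype.sum_prod_type, norm_mul, RCLike.norm_conj, mul_pow]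

end NoiseMatrix

theorem expected_sq_tangent_leading_term_general
    (n : ℕ) (hn : 1 ≤ n) (p : ℝ)
    {Ω : Type*} [MeasurableSpace Ω] (μ : Measure Ω)
    (R : Fin n → Fin n → Ω → ℂ)
    (hindep : iIndepFun
      (fun ij : Fin n × Fin n => R ij.1 ij.2) μ)
    (hL2 : ∀ i j, i ≠ j → MemLp (R i j) 2 μ)
    (hmean : ∀ i j, i ≠ j → ∫ ω, R i j ω ∂μ = 0)
    (hvar : ∀ i j, i ≠ j → ∫ ω, ‖R i j ω‖ ^ 2 ∂μ = 1 - p ^ 2)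
    (hdiag : ∀ i ω, R i i ω = 0)
    (z : Fin n → ℂ) (hz : ∀ j, ‖z j‖ = 1 / Real.sqrt n) :
    (∫ ω, (∑ i, ‖∑ j, R i j ω * z j‖ ^ 2
        - ‖∑ i, ∑ j, starRingEnd ℂ (z i) * R i j ω * z j‖ ^ 2) ∂μ)
      = (1 - p ^ 2) * ((n : ℝ) - 1) ^ 2 / n ∧
    (0 < p →
      (∫ ω, (∑ i, ‖∑ j, R i j ω * z j‖ ^ 2
          - ‖∑ i, ∑ j, starRingEnd ℂ (z i) * R i j ω * z j‖ ^ 2) ∂μ) / ((n : ℝ) * p) ^ 2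
        = ((n : ℝ) - 1) ^ 2 * (1 - p ^ 2) / ((n : ℝ) ^ 3 * p ^ 2)) := by
  have hn0 : (n : ℝ) ≠ 0 := Nat.cast_ne_zero.2 (by omega)
  have hzsq (j : Fin n) : ‖z j‖ ^ 2 = 1 / n := by
    rw [hz j, div_pow, one_pow, Real.sq_sqrt n.cast_nonneg]
  have hR := memLp_two_entry hL2 hdiag
  have horth (a b : Fin n × Fin n) (hab : a ≠ b) :=
    integral_conj_mul_entries_eq_zero hindep hL2 hmean hdiag hab
  have hrows := integral_sum_norm_sq_rows z hR horth
  have hquad := integral_norm_sq_quadForm z hR horth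
  simp only [hzsq, integral_norm_sq_entry hvar hdiag, ← Finset.mul_sum,
    Fintype.sum_ite_eq_zero_const, Finset.sum_const, Finset.card_univ, Fintype.card_fin,
    nsmul_eq_mul] at hrows hquad
  have hmain : (∫ ω, (∑ i, ‖∑ j, R i j ω * z j‖ ^ 2
      - ‖∑ i, ∑ j, starRingEnd ℂ (z i) * R i j ω * z j‖ ^ 2) ∂μ)
      = (1 - p ^ 2) * ((n : ℝ) - 1) ^ 2 / n := by
    rw [integral_sub (integrable_sum_norm_sq_rows z hR) (integrable_norm_sq_quadForm z hR),
      hrows, hquad]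
    field_simp
  exact ⟨hmain, fun hp0 => by rw [hmain]; field_simp⟩

theorem expected_sq_tangent_leading_term
    (n : ℕ) (hn : 1 ≤ n) (p : ℝ) (hp : p ∈ Set.Icc (0 : ℝ) 1)
    {Ω : Type*} [MeasurableSpace Ω] (μ : Measure Ω) [IsProbabilityMeasure μ]
    (R : Fin n → Fin n → Ω → ℂ)
    (hindep : iIndepFun
      (fun ij : Fin n × Fin n => R ij.1 ij.2) μ)
    (hL2 : ∀ i j, i ≠ j → MemLp (R i j) 2 μ)
    (hmean : ∀ i j, i ≠ j → ∫ ω, R i j ω ∂μ = 0)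
    (hvar : ∀ i j, i ≠ j → ∫ ω, ‖R i j ω‖ ^ 2 ∂μ = 1 - p ^ 2)
    (hdiag : ∀ i ω, R i i ω = 0)
    (z : Fin n → ℂ) (hz : ∀ j, ‖z j‖ = 1 / Real.sqrt n) :
    (∫ ω, (∑ i, ‖∑ j, R i j ω * z j‖ ^ 2
        - ‖∑ i, ∑ j, starRingEnd ℂ (z i) * R i j ω * z j‖ ^ 2) ∂μ)
      = (1 - p ^ 2) * ((n : ℝ) - 1) ^ 2 / n ∧
    (0 < p →
      (∫ ω, (∑ i, ‖∑ j, R i j ω * z j‖ ^ 2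
          - ‖∑ i, ∑ j, starRingEnd ℂ (z i) * R i j ω * z j‖ ^ 2) ∂μ) / ((n : ℝ) * p) ^ 2
        = ((n : ℝ) - 1) ^ 2 * (1 - p ^ 2) / ((n : ℝ) ^ 3 * p ^ 2)) :=
  expected_sq_tangent_leading_term_general n hn p μ R hindep hL2 hmean hvar hdiag z hz
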